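/- arXiv:1907.11407 — 4 statements merged into one kernel-verified Lean document; each statement's English description precedes it below -/
import Mathlib

section
/- Let C be a non-hyperelliptic smooth curve of genus g ≥ 4 with canonical embedding φ: C → P^{g-1}. Let Q ∈ I_2(K_C) be a quadric of rank 4 containing the canonical curve, determined by a line bundle L and pencils U ⊂ H^0(L), W ⊂ H^0(K_C - L) with U = ⟨s_0, s_1⟩, W = ⟨t_0, t_1⟩, so that Q = s_0t_0 ⊙ s_1t_1 - s_0t_1 ⊙ s_1t_0. Then the zero locus of the associated section of K_{C×C} in C × C equals {(p,q) : f(p) = f(q)} ∪ {(p,q) : g(p) = g(q)} ∪ ((B_f ∪ B_g) × C) ∪ (C × (B_f ∪ B_g)), where f and g are the maps to P^1 given by the pencils U and W, and B_f, B_g are their base loci. -/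
/-!
The section `Q̃` factors into the `2 × 2` minors of the two pencils,
`Q̃(p,q) = (s₀(p)s₁(q) - s₁(p)s₀(q)) · (t₀(p)t₁(q) - t₁(p)t₀(q))`,
and the minor of a pencil vanishes at `(p,q)` exactly when one of `p, q` is a base point
of the pencil or, away from the base locus, `f(p) = f(q)`.
-/

namespace Pencil

variable {X R : Type*} [CommRing R]

def baseLocus (s₀ s₁ : X → R) : Set X := {p | s₀ p = 0 ∧ s₁ p = 0}

def minor (s₀ s₁ : X → R) (p q : X) : R := s₀ p * s₁ q - s₁ p * s₀ q

theorem rankFourQuadric_eq_minor_mul_minor (s₀ s₁ t₀ t₁ : X → R) (p q : X) :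
    s₀ p * t₀ p * (s₁ q * t₁ q) + s₁ p * t₁ p * (s₀ q * t₀ q)
        - s₀ p * t₁ p * (s₁ q * t₀ q) - s₁ p * t₀ p * (s₀ q * t₁ q) =
      minor s₀ s₁ p q * minor t₀ t₁ p q := by
  unfold minor
  ring

theorem minor_eq_zero_iff (s₀ s₁ : X → R) (p q : X) :
    minor s₀ s₁ p q = 0 ↔
      (p ∉ baseLocus s₀ s₁ ∧ q ∉ baseLocus s₀ s₁ ∧ s₀ p * s₁ q = s₁ p * s₀ q) ∨
        p ∈ baseLocus s₀ s₁ ∨ q ∈ baseLocus s₀ s₁ := by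
  rw [minor, sub_eq_zero]
  constructor
  · intro h
    by_cases hp : p ∈ baseLocus s₀ s₁
    · exact Or.inr (Or.inl hp)
    by_cases hq : q ∈ baseLocus s₀ s₁
    · exact Or.inr (Or.inr hq)
    exact Or.inl ⟨hp, hq, h⟩
  · rintro (⟨-, -, h⟩ | ⟨hp₀, hp₁⟩ | ⟨hq₀, hq₁⟩)
    · exact h
    · simp [hp₀, hp₁]
    · simp [hq₀, hq₁]

end Pencil

open Pencil in
theorem zero_locus_rank_four_quadric_general
    (Point : Type)                                  -- the points of the curve C
    (s0 s1 : Point → ℂ)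
    (t0 t1 : Point → ℂ)
    (Qt : Point → Point → ℂ)                        -- the section of K_{C×C} given by Q
    (hQt : ∀ p q, Qt p q =
      s0 p * t0 p * (s1 q * t1 q) + s1 p * t1 p * (s0 q * t0 q)
        - s0 p * t1 p * (s1 q * t0 q) - s1 p * t0 p * (s0 q * t1 q))
    (Bf : Set Point) (hBf : Bf = {p | s0 p = 0 ∧ s1 p = 0})   -- base locus of f
    (Bg : Set Point) (hBg : Bg = {p | t0 p = 0 ∧ t1 p = 0})   -- base locus of g
    (feq geq : Point → Point → Prop)
    -- `feq p q` means `p, q` are not base points of the pencil `U` and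
    -- `f(p) = f(q)` in `ℙ¹`, i.e. `(s₀(p) : s₁(p)) = (s₀(q) : s₁(q))`
    (hfeq : ∀ p q, feq p q ↔ p ∉ Bf ∧ q ∉ Bf ∧ s0 p * s1 q = s1 p * s0 q)
    (hgeq : ∀ p q, geq p q ↔ p ∉ Bg ∧ q ∉ Bg ∧ t0 p * t1 q = t1 p * t0 q) :
    {pq : Point × Point | Qt pq.1 pq.2 = 0} =
      {pq : Point × Point | feq pq.1 pq.2} ∪ {pq : Point × Point | geq pq.1 pq.2}
        ∪ (Bf ∪ Bg) ×ˢ (Set.univ : Set Point)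
        ∪ (Set.univ : Set Point) ×ˢ (Bf ∪ Bg) := by
  obtain rfl : Bf = baseLocus s0 s1 := hBf
  obtain rfl : Bg = baseLocus t0 t1 := hBg
  ext ⟨p, q⟩
  have hzero : Qt p q = 0 ↔ minor s0 s1 p q = 0 ∨ minor t0 t1 p q = 0 := by
    rw [hQt, rankFourQuadric_eq_minor_mul_minor, mul_eq_zero]
  simp only [Set.mem_ofPred_eq, Set.mem_union, Set.mem_prod, Set.mem_univ, and_true, true_and,
    hzero, minor_eq_zero_iff, hfeq, hgeq]
  tauto

/-- `C` is a non-hyperelliptic curve of genus `g ≥ 4` with point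
set `Point`; sections of line bundles on `C` are represented by functions
`Point → ℂ` via fixed local trivialisations.  A rank `4` quadric
`Q = s₀t₀ ⊙ s₁t₁ - s₀t₁ ⊙ s₁t₀ ∈ I₂(K_C)` is given by pencils
`U = ⟨s₀, s₁⟩ ⊂ H⁰(L)` and `W = ⟨t₀, t₁⟩ ⊂ H⁰(K_C - L)`; the associated
section `Q̃` of `K_{C×C}` is `Q̃(p,q) = s₀t₀(p)·s₁t₁(q) + s₁t₁(p)·s₀t₀(q)
- s₀t₁(p)·s₁t₀(q) - s₁t₀(p)·s₀t₁(q)`.  Its zero locus in `C × C` is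
`{f(p) = f(q)} ∪ {g(p) = g(q)} ∪ (B_f ∪ B_g) × C ∪ C × (B_f ∪ B_g)`, where
`f, g : C → ℙ¹` are the maps given by the two pencils and `B_f, B_g` their
base loci. -/
theorem zero_locus_rank_four_quadric
    (Point : Type)                                  -- the points of the curve C
    (g : ℕ) (hg : 4 ≤ g)                            -- the genus of C
    (NonHyperelliptic : Prop) (hnh : NonHyperelliptic)
    (s0 s1 : Point → ℂ) (hs : ¬ ∃ c : ℂ, (∀ p, s1 p = c * s0 p) ∨ ∀ p, s0 p = c * s1 p)
    (t0 t1 : Point → ℂ) (ht : ¬ ∃ c : ℂ, (∀ p, t1 p = c * t0 p) ∨ ∀ p, t0 p = c * t1 p)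
    (Qt : Point → Point → ℂ)                        -- the section of K_{C×C} given by Q
    (hQt : ∀ p q, Qt p q =
      s0 p * t0 p * (s1 q * t1 q) + s1 p * t1 p * (s0 q * t0 q)
        - s0 p * t1 p * (s1 q * t0 q) - s1 p * t0 p * (s0 q * t1 q))
    (Bf : Set Point) (hBf : Bf = {p | s0 p = 0 ∧ s1 p = 0})   -- base locus of f
    (Bg : Set Point) (hBg : Bg = {p | t0 p = 0 ∧ t1 p = 0})   -- base locus of g
    (feq geq : Point → Point → Prop)
    -- `feq p q` means `p, q` are not base points of the pencil `U` and
    -- `f(p) = f(q)` in `ℙ¹`, i.e. `(s₀(p) : s₁(p)) = (s₀(q) : s₁(q))`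
    (hfeq : ∀ p q, feq p q ↔ p ∉ Bf ∧ q ∉ Bf ∧ s0 p * s1 q = s1 p * s0 q)
    (hgeq : ∀ p q, geq p q ↔ p ∉ Bg ∧ q ∉ Bg ∧ t0 p * t1 q = t1 p * t0 q) :
    {pq : Point × Point | Qt pq.1 pq.2 = 0} =
      {pq : Point × Point | feq pq.1 pq.2} ∪ {pq : Point × Point | geq pq.1 pq.2}
        ∪ (Bf ∪ Bg) ×ˢ (Set.univ : Set Point)
        ∪ (Set.univ : Set Point) ×ˢ (Bf ∪ Bg) :=
  zero_locus_rank_four_quadric_general Point s0 s1 t0 t1 Qt hQt Bf hBf Bg hBg feq geq hfeq hgeq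
end

section
/- Let C be a smooth curve of genus g, M a line bundle with h^0(M) = r+1 ≥ 3, M base point free, with the map f: C → P^r birational onto its image, deg M = d. Let t ∈ H^0(M) be a general section with distinct zeros p_1,...,p_d in general linear position, and W ⊂ H^0(M) a complement of ⟨t⟩. Then the evaluation map j: W → C^d, s ↦ (s(p_1),...,s(p_d)) (with respect to chosen local trivializations) is injective, and for every nonzero s ∈ W, the vector j(s) has at most r-1 zero coordinates. -/
/-- let `C` be a smooth curve of genus `g`, `M` a base point
free line bundle of degree `d` with `h⁰(M) = r + 1 ≥ 3` inducing a map
`f : C → ℙʳ` birational onto its image.  Here `V` models `H⁰(M)` and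
`ev p : V →ₗ ℂ` is the evaluation at `p` (with respect to chosen local
trivialisations).  Let `t ∈ H⁰(M)` be a general section with distinct zeros
`p 1, ..., p d` in general linear position (Castelnuovo uniform position: any
`r` of them cut out exactly `⟨t⟩`), and let `W` be a complement of `⟨t⟩`.
Then the evaluation map `j : W → ℂᵈ`, `s ↦ (s(p₁),...,s(p_d))`, is injective
and every nonzero `s ∈ W` has at most `r - 1` zero coordinates. -/
theorem evaluation_map_injective
    (g : ℕ)
    (Point : Type)                                   -- points of C
    (V : Type) [AddCommGroup V] [Module ℂ V] [FiniteDimensional ℂ V]  -- H⁰(M)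
    (r d : ℕ) (hr : 2 ≤ r) (hrd : r ≤ d)
    (hdim : Module.finrank ℂ V = r + 1)
    (BasePointFree BirationalOntoImage : Prop)
    (hbpf : BasePointFree) (hbir : BirationalOntoImage)
    (ev : Point → (V →ₗ[ℂ] ℂ))                       -- evaluation of sections
    (p : Fin d → Point) (hp : Function.Injective p)  -- the distinct zeros of t
    (t : V) (ht : t ≠ 0) (htz : ∀ i, ev (p i) t = 0)
    -- general linear position (Castelnuovo uniform position lemma):
    (hunif : ∀ S : Finset (Fin d), S.card = r →
      ∀ v : V, (∀ i ∈ S, ev (p i) v = 0) → ∃ c : ℂ, v = c • t)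
    (W : Submodule ℂ V) (hW : IsCompl W (Submodule.span ℂ {t})) :
    Function.Injective (fun s : W => fun i : Fin d => ev (p i) (s : V)) ∧
      ∀ s : V, s ∈ W → s ≠ 0 → {i : Fin d | ev (p i) s = 0}.ncard ≤ r - 1 := by

  have key : ∀ s : V, s ∈ W →
      (∃ S : Finset (Fin d), S.card = r ∧ ∀ i ∈ S, ev (p i) s = 0) → s = 0 := by
    intro s hsW ⟨S, hScard, hSz⟩
    obtain ⟨c, hc⟩ := hunif S hScard s hSz
    by_cases hc0 : c = 0
    · simpa [hc0] using hc
    · exfalso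
      have hts : s ∈ Submodule.span ℂ {t} := by
        rw [hc]; exact Submodule.smul_mem _ _ (Submodule.mem_span_singleton_self t)
      have : s = 0 := by
        have := hW.disjoint
        exact (Submodule.disjoint_def.mp this) s hsW hts
      rw [this] at hc
      exact ht (by
        have : c⁻¹ • (0 : V) = c⁻¹ • (c • t) := by rw [hc]
        simpa [smul_smul, inv_mul_cancel₀ hc0] using this.symm)
  constructor
  · intro s₁ s₂ heq
    obtain ⟨S, hS, hScard⟩ := Finset.exists_subset_card_eq (s := (Finset.univ : Finset (Fin d))) (n := r)
      (by simpa using hrd)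
    have hdiff : ((s₁ : V) - (s₂ : V)) = 0 := by
      apply key _ (W.sub_mem s₁.2 s₂.2)
      exact ⟨S, hScard, fun i _ => by
        have := congrFun heq i
        simp only [map_sub]
        simpa using sub_eq_zero.mpr this⟩
    exact Subtype.ext (sub_eq_zero.mp hdiff)
  · intro s hsW hs0
    by_contra hn
    push_neg at hn
    have hfin : {i : Fin d | ev (p i) s = 0}.Finite := Set.toFinite _
    have hr' : r ≤ {i : Fin d | ev (p i) s = 0}.ncard := by omega
    obtain ⟨S, hS, hScard⟩ := Finset.exists_subset_card_eq (s := hfin.toFinset) (n := r)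
      (by rw [Set.Finite.card_toFinset, ← Set.toFinset_card]; rwa [Set.ncard_eq_toFinset_card'] at hr')
    exact hs0 (key s hsW ⟨S, hScard, fun i hi => by
      have := hS hi
      rw [Set.Finite.mem_toFinset] at this
      exact this⟩)
end

section
/- Let V = C^d with coordinates x_1,...,x_d and let r < d. Suppose we are given, for each i = 1,...,r, a diagonal quadratic form q_i = a_{i,i}x_i² + Σ_{j>r} a_{i,j}x_j² with a_{i,i} ≠ 0 and a_{i,j} ≠ 0 for all j > r. Let Z ⊂ P^{d-1} be the common zero locus of q_1,...,q_r. Then Z is disjoint from the linear subspace H = {x_{r+1} = ... = x_d = 0}, and dim Z = d - r - 1. -/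
set_option maxHeartbeats 1000000

open MvPolynomial

section AuxCL

/-- Coquand–Lombardi style: a "singularity relation" for elements `x 0, ..., x n`
chosen between consecutive primes of a chain yields a contradiction. -/
lemma cl_chain_contradiction {R : Type*} [CommRing R] :
    ∀ (n : ℕ) (p : ℕ → Ideal R), (∀ k, (p k).IsPrime) → (∀ k, p k ≤ p (k+1)) →
    ∀ (x : ℕ → R), (∀ k, k ≤ n → x k ∈ p (k+1)) → (∀ k, k ≤ n → x k ∉ p k) →
    ∀ (m : ℕ → ℕ) (b : ℕ → R),
      (∏ i ∈ Finset.range (n+1), x i ^ m i) +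
        ∑ k ∈ Finset.range (n+1), b k * ((∏ i ∈ Finset.range k, x i ^ m i) * x k ^ (m k + 1))
        ∈ p 0 → False := by
  intro n
  induction n with
  | zero =>
    intro p hp hc x hx1 hx2 m b hmem
    simp only [zero_add, Finset.prod_range_one, Finset.sum_range_one, Finset.range_zero,
      Finset.prod_empty, one_mul] at hmem
    -- x 0 ^ m 0 + b 0 * x 0 ^ (m 0 + 1) = x 0 ^ m 0 * (1 + b 0 * x 0)
    have h0 : x 0 ^ m 0 * (1 + b 0 * x 0) ∈ p 0 := by
      have : x 0 ^ m 0 * (1 + b 0 * x 0) = x 0 ^ m 0 + b 0 * x 0 ^ (m 0 + 1) := by ring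
      rwa [this]
    have hprime := hp 0
    rcases hprime.mem_or_mem h0 with h | h
    · exact hx2 0 le_rfl ((hp 0).mem_of_pow_mem _ h)
    · have h1 : (1 : R) + b 0 * x 0 ∈ p 1 := hc 0 h
      have hx01 : x 0 ∈ p 1 := hx1 0 le_rfl
      have : (1 : R) ∈ p 1 := by
        have := Ideal.sub_mem _ h1 (Ideal.mul_mem_left _ (b 0) hx01)
        simpa using this
      exact (hp 1).ne_top (Ideal.eq_top_of_isUnit_mem _ this isUnit_one)
  | succ n ih =>
    intro p hp hc x hx1 hx2 m b hmem
    -- factor out x 0 ^ m 0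
    set E : R := (∏ i ∈ Finset.range (n+1), x (i+1) ^ m (i+1)) +
        ∑ k ∈ Finset.range (n+1), b (k+1) *
          ((∏ i ∈ Finset.range k, x (i+1) ^ m (i+1)) * x (k+1) ^ (m (k+1) + 1)) with hE
    have key : x 0 ^ m 0 * (E + b 0 * x 0) ∈ p 0 := by
      have expand : x 0 ^ m 0 * (E + b 0 * x 0) =
          (∏ i ∈ Finset.range (n+1+1), x i ^ m i) +
          ∑ k ∈ Finset.range (n+1+1), b k *
            ((∏ i ∈ Finset.range k, x i ^ m i) * x k ^ (m k + 1)) := by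
        have hk : ∀ k, (∏ i ∈ Finset.range (k+1), x i ^ m i)
            = (∏ i ∈ Finset.range k, x (i+1) ^ m (i+1)) * x 0 ^ m 0 := fun k =>
          Finset.prod_range_succ' (fun i => x i ^ m i) k
        have hsum : x 0 ^ m 0 * (∑ k ∈ Finset.range (n+1), b (k+1) *
              ((∏ i ∈ Finset.range k, x (i+1) ^ m (i+1)) * x (k+1) ^ (m (k+1) + 1)))
            = ∑ k ∈ Finset.range (n+1), b (k+1) *
              ((∏ i ∈ Finset.range (k+1), x i ^ m i) * x (k+1) ^ (m (k+1) + 1)) := by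
          rw [Finset.mul_sum]
          refine Finset.sum_congr rfl fun k _ => ?_
          rw [hk k]; ring
        rw [Finset.prod_range_succ' (fun i => x i ^ m i) (n+1),
          Finset.sum_range_succ' (fun k => b k *
            ((∏ i ∈ Finset.range k, x i ^ m i) * x k ^ (m k + 1))) (n+1),
          hE, mul_add, mul_add, hsum]
        simp only [Finset.range_zero, Finset.prod_empty, one_mul]
        ring
      rwa [expand]
    have hstep : E + b 0 * x 0 ∈ p 0 := by
      rcases (hp 0).mem_or_mem key with h | h
      · exact absurd ((hp 0).mem_of_pow_mem _ h) (hx2 0 (by omega))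
      · exact h
    have hEp1 : E ∈ p 1 := by
      have h1 : E + b 0 * x 0 ∈ p 1 := hc 0 hstep
      have hx01 : x 0 ∈ p 1 := hx1 0 (by omega)
      have := Ideal.sub_mem _ h1 (Ideal.mul_mem_left _ (b 0) hx01)
      simpa using this
    exact ih (fun k => p (k+1)) (fun k => hp (k+1)) (fun k => hc (k+1))
      (fun k => x (k+1)) (fun k hk => hx1 (k+1) (by omega)) (fun k hk => hx2 (k+1) (by omega))
      (fun k => m (k+1)) (fun k => b (k+1)) hEp1

lemma totalDegree_aeval_monomial_le {K : Type*} [Field K] {m n : ℕ}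
    (f : Fin n → MvPolynomial (Fin m) K) (D : ℕ) (hD : ∀ i, (f i).totalDegree ≤ D)
    (β : Fin n →₀ ℕ) (hβ : ∀ i, β i ≤ D') :
    (∏ i : Fin n, (f i) ^ β i).totalDegree ≤ n * D' * D := by
  calc (∏ i : Fin n, (f i) ^ β i).totalDegree
      ≤ ∑ i : Fin n, ((f i) ^ β i).totalDegree := totalDegree_finset_prod _ _
    _ ≤ ∑ i : Fin n, D' * D := by
        refine Finset.sum_le_sum fun i _ => ?_
        calc ((f i) ^ β i).totalDegree ≤ β i * (f i).totalDegree :=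
              totalDegree_pow _ _
          _ ≤ D' * D := Nat.mul_le_mul (hβ i) (hD i)
    _ = n * D' * D := by simp [Finset.sum_const, mul_assoc]


lemma card_le_of_linearIndependent_mem_span {K M : Type*} [Field K] [AddCommGroup M]
    [Module K M] {ι : Type*} [Fintype ι] (g : ι → M) (hg : LinearIndependent K g)
    (s : Finset M) (h : ∀ i, g i ∈ Submodule.span K (s : Set M)) :
    Fintype.card ι ≤ s.card := by
  have hg' : LinearIndependent K (fun i => (⟨g i, h i⟩ : Submodule.span K (s : Set M))) := by
    apply LinearIndependent.of_comp (Submodule.span K (s : Set M)).subtype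
    exact hg
  calc Fintype.card ι
      ≤ Module.finrank K (Submodule.span K (s : Set M)) := hg'.fintype_card_le_finrank
    _ ≤ s.card := finrank_span_finset_le_card _

/-- any `m+1` polynomials in `m` variables over a field are algebraically dependent. -/
lemma not_algebraicIndependent_of_card {K : Type*} [Field K] (m : ℕ)
    (f : Fin (m+1) → MvPolynomial (Fin m) K) : ¬ AlgebraicIndependent K f := by
  intro h
  classical
  -- degree bound for the f i
  obtain ⟨D, hD⟩ : ∃ D, D = 1 + Finset.univ.sup (fun i => (f i).totalDegree) := ⟨_, rfl⟩
  have hDi : ∀ i, (f i).totalDegree ≤ D := fun i => by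
    exact le_trans (Finset.le_sup (f := fun j => (f j).totalDegree) (Finset.mem_univ i))
      (by omega)
  obtain ⟨c, hc⟩ : ∃ c, c = (m+1) * D + 1 := ⟨_, rfl⟩
  obtain ⟨t, ht⟩ : ∃ t, t = c ^ m := ⟨_, rfl⟩
  obtain ⟨N, hN⟩ : ∃ N, N = (m+1) * t * D := ⟨_, rfl⟩
  -- the linearly independent family indexed by exponent boxes
  set e : (Fin (m+1) → Fin (t+1)) → (Fin (m+1) →₀ ℕ) :=
    fun β => Finsupp.equivFunOnFinite.symm (fun i => (β i : ℕ)) with he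
  have einj : Function.Injective e := by
    intro β γ hβγ
    funext i
    have := congrArg (fun g => g i) hβγ
    simpa [he, Fin.val_injective.eq_iff] using this
  have hmono : LinearIndependent K (fun β : Fin (m+1) → Fin (t+1) =>
      (monomial (e β) (1:K) : MvPolynomial (Fin (m+1)) K)) := by
    have h2 := (basisMonomials (Fin (m+1)) K).linearIndependent.comp e einj
    simp only [coe_basisMonomials] at h2
    exact h2
  have hg : LinearIndependent K (fun β : Fin (m+1) → Fin (t+1) =>
      aeval f (monomial (e β) (1:K))) := by
    have := hmono.map' (aeval f).toLinearMap
      (LinearMap.ker_eq_bot.mpr (algebraicIndependent_iff_injective_aeval.mp h))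
    exact this
  -- these lie in the span of monomials of exponent ≤ N
  set M : Finset (MvPolynomial (Fin m) K) :=
    (Finset.univ : Finset (Fin m → Fin (N+1))).image
      (fun γ => monomial (Finsupp.equivFunOnFinite.symm (fun i => (γ i : ℕ))) (1:K)) with hM
  have hmem : ∀ β, aeval f (monomial (e β) (1:K)) ∈ Submodule.span K (M : Set _) := by
    intro β
    have hdeg : (aeval f (monomial (e β) (1:K))).totalDegree ≤ N := by
      have : aeval f (monomial (e β) (1:K)) = ∏ i : Fin (m+1), (f i) ^ (e β i) := by
        simp [aeval_monomial, Finsupp.prod_fintype, monomial_eq]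
      rw [this]
      have := totalDegree_aeval_monomial_le (D' := t) f D hDi (e β)
        (fun i => by simpa [he] using Fin.is_le (β i))
      calc _ ≤ (m+1) * t * D := this
        _ = N := hN.symm
    -- every polynomial of totalDegree ≤ N is in the span of M
    set p := aeval f (monomial (e β) (1:K)) with hp
    rw [← support_sum_monomial_coeff p]
    refine Submodule.sum_mem _ fun v hv => ?_
    have hvN : ∀ i, v i ≤ N := by
      intro i
      have h1 : v i ≤ v.sum fun _ n => n := by
        by_cases hi : i ∈ v.support
        · exact Finset.single_le_sum (fun _ _ => Nat.zero_le _) hi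
        · simp [Finsupp.notMem_support_iff.mp hi]
      exact le_trans h1 (le_trans (le_totalDegree hv) hdeg)
    have : monomial v (coeff v p) = (coeff v p) • monomial v (1:K) := by
      simp [smul_monomial]
    rw [this]
    refine Submodule.smul_mem _ _ (Submodule.subset_span ?_)
    simp only [hM, Finset.coe_image, Set.mem_image]
    refine ⟨fun i => ⟨v i, by have := hvN i; omega⟩, by simp, ?_⟩
    congr 1
    ext i
    simp
  -- conclude the cardinality inequality
  have hcard : Fintype.card (Fin (m+1) → Fin (t+1)) ≤ M.card :=
    card_le_of_linearIndependent_mem_span _ hg M hmem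
  have hMle : M.card ≤ (N+1) ^ m := by
    calc M.card ≤ Fintype.card (Fin m → Fin (N+1)) := Finset.card_image_le.trans (by simp)
      _ = (N+1) ^ m := by simp
  have hbig : (t+1) ^ (m+1) ≤ (N+1) ^ m := by
    calc (t+1) ^ (m+1) = Fintype.card (Fin (m+1) → Fin (t+1)) := by simp
      _ ≤ M.card := hcard
      _ ≤ (N+1) ^ m := hMle
  -- numeric contradiction
  have hNc : N + 1 ≤ c * (t+1) := by
    subst hN hc; nlinarith
  have h2 : (t+1) ^ (m+1) ≤ (c * (t+1)) ^ m :=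
    le_trans hbig (Nat.pow_le_pow_left hNc m)
  have h3 : (t+1) ^ (m+1) = (t+1) * (t+1)^m := by ring
  have h4 : (c * (t+1)) ^ m = c^m * (t+1)^m := mul_pow c (t+1) m
  rw [h3, h4] at h2
  have h5 : t + 1 ≤ c ^ m := Nat.le_of_mul_le_mul_right h2 (Nat.pow_pos (by omega))
  omega

lemma fin_filter_lt_prod {M : Type*} [CommMonoid M] {n : ℕ} (k : Fin n) (g : ℕ → M) :
    ∏ i ∈ Finset.univ.filter (fun i : Fin n => i < k), g i.val
      = ∏ i ∈ Finset.range k.val, g i := by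
  refine Finset.prod_bij' (fun i _ => i.val) (fun j hj => ⟨j, ?_⟩) ?_ ?_ ?_ ?_ ?_
  · exact lt_trans (Finset.mem_range.mp hj) k.isLt
  · intro i hi
    simp only [Finset.mem_filter, Finset.mem_univ, true_and] at hi
    exact Finset.mem_range.mpr hi
  · intro j hj
    simp only [Finset.mem_filter, Finset.mem_univ, true_and]
    exact Finset.mem_range.mp hj
  · intro i _; rfl
  · intro j _; rfl
  · intro i _; rfl

lemma prod_split_at {M : Type*} [CommMonoid M] {n : ℕ} (k : Fin n) (g : Fin n → M) :
    ∏ i : Fin n, g i =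
      (∏ i ∈ Finset.univ.filter (fun i : Fin n => i < k), g i) * g k *
      (∏ i ∈ Finset.univ.filter (fun i : Fin n => k < i), g i) := by
  classical
  rw [← Finset.prod_filter_mul_prod_filter_not Finset.univ (fun i : Fin n => i < k) g]
  have hsplit : Finset.univ.filter (fun i : Fin n => ¬ i < k)
      = insert k (Finset.univ.filter (fun i : Fin n => k < i)) := by
    ext i
    simp only [Finset.mem_filter, Finset.mem_univ, true_and, Finset.mem_insert, not_lt]
    constructor
    · intro h
      rcases eq_or_lt_of_le h with h | h
      · exact Or.inl h.symm
      · exact Or.inr h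
    · rintro (rfl | h)
      · exact le_rfl
      · exact le_of_lt h
  rw [hsplit, Finset.prod_insert (by simp), mul_assoc]

/-- From a nontrivial polynomial relation among `x 0, ..., x n` we obtain a
Coquand–Lombardi singularity relation. -/
lemma exists_singularity_relation {K R : Type*} [Field K] [CommRing R] [Algebra K R]
    (n : ℕ) (x : ℕ → R) (Q : MvPolynomial (Fin (n+1)) K) (hQ0 : Q ≠ 0)
    (hQ : aeval (fun i : Fin (n+1) => x i.val) Q = 0) :
    ∃ (m : ℕ → ℕ) (b : ℕ → R),
      (∏ i ∈ Finset.range (n+1), x i ^ m i) +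
        ∑ k ∈ Finset.range (n+1), b k *
          ((∏ i ∈ Finset.range k, x i ^ m i) * x k ^ (m k + 1)) = 0 := by
  classical
  -- the lex-minimal exponent
  have hsupp : Q.support.Nonempty := by
    rwa [Finset.nonempty_iff_ne_empty, Ne, MvPolynomial.support_eq_empty]
  set S : Finset (Lex (Fin (n+1) →₀ ℕ)) := Q.support.map toLex.toEmbedding with hS
  have hSne : S.Nonempty := by simpa [hS] using hsupp
  set α : Fin (n+1) →₀ ℕ := ofLex (S.min' hSne) with hα
  have hαsupp : α ∈ Q.support := by
    have := S.min'_mem hSne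
    simpa [hS, hα] using this
  have hc : coeff α Q ≠ 0 := by rwa [← MvPolynomial.mem_support_iff]
  set c : K := coeff α Q with hcdef
  set Q' : MvPolynomial (Fin (n+1)) K := c⁻¹ • Q with hQ'
  have hsupp' : Q'.support = Q.support := by
    ext d
    simp only [hQ', MvPolynomial.mem_support_iff, MvPolynomial.coeff_smul, smul_eq_mul]
    constructor
    · intro h h2; exact h (by rw [h2, mul_zero])
    · intro h; exact mul_ne_zero (inv_ne_zero hc) h
  have hcoeffα : coeff α Q' = 1 := by
    simp [hQ', MvPolynomial.coeff_smul, inv_mul_cancel₀ hc]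
    exact inv_mul_cancel₀ hc
  have hQ'0 : aeval (fun i : Fin (n+1) => x i.val) Q' = 0 := by
    rw [hQ', map_smul, hQ, smul_zero]
  -- minimality of α
  have hmin : ∀ d ∈ Q'.support, d ≠ α → ∃ k : Fin (n+1), (∀ j < k, α j = d j) ∧ α k < d k := by
    intro d hd hdα
    have hdS : toLex d ∈ S := by
      rw [hS]; simp only [Finset.mem_map, Equiv.coe_toEmbedding]
      exact ⟨d, by rwa [hsupp'] at hd, rfl⟩
    have hlt : S.min' hSne < toLex d := by
      rcases lt_or_eq_of_le (S.min'_le _ hdS) with h | h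
      · exact h
      · exact absurd (congrArg ofLex h.symm) (by simpa [hα] using hdα)
    have : toLex α < toLex d := by rwa [hα, toLex_ofLex] at *
    rw [Finsupp.Lex.lt_iff] at this
    obtain ⟨k, h1, h2⟩ := this
    exact ⟨k, fun j hj => h1 j hj, h2⟩
  -- the fiber map
  have hK : ∀ d ∈ Q'.support.erase α, ∃ k : Fin (n+1), (∀ j < k, α j = d j) ∧ α k < d k :=
    fun d hd => hmin d (Finset.mem_of_mem_erase hd) (Finset.ne_of_mem_erase hd)
  choose! KK hKK1 hKK2 using hK
  -- the main expansion
  have hmemα : α ∈ Q'.support := by rwa [hsupp']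
  have hexp : (0:R) = (algebraMap K R) (coeff α Q') * ∏ i : Fin (n+1), x i.val ^ α i +
      ∑ d ∈ Q'.support.erase α,
        (algebraMap K R) (coeff d Q') * ∏ i : Fin (n+1), x i.val ^ d i := by
    rw [Finset.add_sum_erase _
      (fun d => (algebraMap K R) (coeff d Q') * ∏ i : Fin (n+1), x i.val ^ d i) hmemα,
      ← hQ'0, aeval_def, eval₂_eq']
  -- define the data
  set m : ℕ → ℕ := fun i => if h : i < n+1 then α ⟨i, h⟩ else 0 with hm
  set G : (Fin (n+1) →₀ ℕ) → R := fun d =>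
    (algebraMap K R) (coeff d Q') * x (KK d).val ^ (d (KK d) - α (KK d) - 1) *
      ∏ i ∈ Finset.univ.filter (fun i : Fin (n+1) => KK d < i), x i.val ^ d i with hG
  set b : ℕ → R := fun k => if h : k < n+1 then
      ∑ d ∈ (Q'.support.erase α).filter (fun d => KK d = ⟨k, h⟩), G d else 0 with hb
  refine ⟨m, b, ?_⟩
  -- rewrite the α-product
  have hprodα : (∏ i ∈ Finset.range (n+1), x i ^ m i) = ∏ i : Fin (n+1), x i.val ^ α i := by
    rw [← Fin.prod_univ_eq_prod_range (fun i => x i ^ m i) (n+1)]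
    refine Finset.prod_congr rfl fun i _ => ?_
    simp [hm, i.isLt, Fin.eta]
    intro h; exact absurd i.isLt (by omega)
  -- rewrite each term of the fibered sum
  have hterm : ∀ d ∈ Q'.support.erase α,
      (algebraMap K R) (coeff d Q') * ∏ i : Fin (n+1), x i.val ^ d i =
      ((∏ i ∈ Finset.range (KK d).val, x i ^ m i) * x (KK d).val ^ (m (KK d).val + 1)) * G d := by
    intro d hd
    rw [prod_split_at (KK d) (fun i => x i.val ^ d i)]
    have h1 : ∏ i ∈ Finset.univ.filter (fun i : Fin (n+1) => i < KK d), x i.val ^ d i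
        = ∏ i ∈ Finset.range (KK d).val, x i ^ m i := by
      rw [← fin_filter_lt_prod (KK d) (fun i => x i ^ m i)]
      refine Finset.prod_congr rfl fun i hi => ?_
      simp only [Finset.mem_filter, Finset.mem_univ, true_and] at hi
      rw [← hKK1 d hd i hi]
      simp [hm, i.isLt, Fin.eta]
      intro h; exact absurd i.isLt (by omega)
    have h2 : x (KK d).val ^ d (KK d)
        = x (KK d).val ^ (m (KK d).val + 1) * x (KK d).val ^ (d (KK d) - α (KK d) - 1) := by
      rw [← pow_add]
      congr 1
      have hlt := hKK2 d hd
      simp only [hm, (KK d).isLt, dif_pos, Fin.eta]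
      omega
    rw [h1, h2, hG]
    ring
  -- put everything together
  have hsum : ∑ d ∈ Q'.support.erase α,
      (algebraMap K R) (coeff d Q') * ∏ i : Fin (n+1), x i.val ^ d i =
      ∑ k ∈ Finset.range (n+1), b k *
        ((∏ i ∈ Finset.range k, x i ^ m i) * x k ^ (m k + 1)) := by
    rw [Finset.sum_congr rfl hterm]
    rw [← Finset.sum_fiberwise (Q'.support.erase α) KK
      (fun d => ((∏ i ∈ Finset.range (KK d).val, x i ^ m i) *
        x (KK d).val ^ (m (KK d).val + 1)) * G d)]
    rw [← Fin.sum_univ_eq_sum_range (fun k => b k *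
      ((∏ i ∈ Finset.range k, x i ^ m i) * x k ^ (m k + 1))) (n+1)]
    refine Finset.sum_congr rfl fun k _ => ?_
    have hbk : b k.val = ∑ d ∈ (Q'.support.erase α).filter (fun d => KK d = k), G d := by
      simp only [hb, k.isLt, dif_pos, Fin.eta]
    rw [hbk, Finset.sum_mul]
    refine Finset.sum_congr rfl fun d hd => ?_
    simp only [Finset.mem_filter] at hd
    rw [hd.2]
    ring
  rw [hcoeffα, map_one, one_mul] at hexp
  rw [hprodα, ← hsum]
  exact hexp.symm
/-- Krull dimension bound: chains of primes in `K[x_1,...,x_m]` have length at most `m`. -/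
lemma mvPolynomial_ltSeries_length_le {K : Type*} [Field K] (m : ℕ)
    (p : LTSeries (PrimeSpectrum (MvPolynomial (Fin m) K))) : p.length ≤ m := by
  by_contra hlen
  push_neg at hlen
  -- a chain of length at least m+1
  set B := MvPolynomial (Fin m) K
  have hmle : m + 1 ≤ p.length := hlen
  set pp : ℕ → Ideal B := fun k => (p ⟨min k p.length, by omega⟩).asIdeal with hpp
  have hppmono : ∀ k, pp k ≤ pp (k+1) := by
    intro k
    apply (PrimeSpectrum.asIdeal_le_asIdeal _ _).mpr
    apply p.monotone
    simp only [Fin.mk_le_mk]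
    omega
  have hppstrict : ∀ k, k ≤ m → pp k < pp (k+1) := by
    intro k hk
    apply (PrimeSpectrum.asIdeal_lt_asIdeal _ _).mpr
    apply p.strictMono
    simp [Fin.mk_lt_mk]
    omega
  have hx : ∀ k, ∃ y : B, k ≤ m → (y ∈ pp (k+1) ∧ y ∉ pp k) := by
    intro k
    by_cases hk : k ≤ m
    · obtain ⟨y, h1, h2⟩ := SetLike.exists_of_lt (hppstrict k hk)
      exact ⟨y, fun _ => ⟨h1, h2⟩⟩
    · exact ⟨0, fun h => absurd h hk⟩
  choose x hx using hx
  have hdep := not_algebraicIndependent_of_card m (fun i : Fin (m+1) => x i.val)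
  rw [algebraicIndependent_iff] at hdep
  push_neg at hdep
  obtain ⟨Q, hQ1, hQ2⟩ := hdep
  obtain ⟨mm, b, hrel⟩ := exists_singularity_relation m x Q hQ2 hQ1
  exact cl_chain_contradiction m pp (fun k => (p _).isPrime) hppmono x
    (fun k hk => (hx k hk).1) (fun k hk => (hx k hk).2) mm b (hrel ▸ (pp 0).zero_mem)

lemma mvPolynomial_ringKrullDim_le {K : Type*} [Field K] (m : ℕ) :
    ringKrullDim (MvPolynomial (Fin m) K) ≤ (m : ℕ) := by
  refine iSup_le fun p => ?_
  have := mvPolynomial_ltSeries_length_le m p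
  exact_mod_cast this

end AuxCL

section AuxMain
lemma dim_quotient_eq (d r : ℕ) (hr : 0 < r) (hrd : r < d)
    (a : Fin d → Fin d → ℂ)
    (ha : ∀ i : Fin d, (i : ℕ) < r →
      a i i ≠ 0 ∧ ∀ j : Fin d, r ≤ (j : ℕ) → a i j ≠ 0) :
    ringKrullDim (MvPolynomial (Fin d) ℂ ⧸ Ideal.span
      {P : MvPolynomial (Fin d) ℂ | ∃ i : Fin d, (i : ℕ) < r ∧
        P = C (a i i) * X i ^ 2 +
          ∑ j ∈ Finset.univ.filter (fun j : Fin d => r ≤ (j : ℕ)),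
            C (a i j) * X j ^ 2}) = (d - r : ℕ) := by
  classical
  set S : Set (MvPolynomial (Fin d) ℂ) := {P : MvPolynomial (Fin d) ℂ | ∃ i : Fin d, (i : ℕ) < r ∧
        P = C (a i i) * X i ^ 2 +
          ∑ j ∈ Finset.univ.filter (fun j : Fin d => r ≤ (j : ℕ)),
            C (a i j) * X j ^ 2} with hS
  set I : Ideal (MvPolynomial (Fin d) ℂ) := Ideal.span S with hI
  set emb : Fin (d - r) → Fin d := fun k => ⟨r + k.val, by omega⟩ with hemb
  set φ : MvPolynomial (Fin (d - r)) ℂ →+* (MvPolynomial (Fin d) ℂ ⧸ I) :=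
    (Ideal.Quotient.mk I).comp (rename emb).toRingHom with hφ
  letI : Algebra (MvPolynomial (Fin (d - r)) ℂ) (MvPolynomial (Fin d) ℂ ⧸ I) := φ.toAlgebra
  have halgmap : algebraMap (MvPolynomial (Fin (d - r)) ℂ) (MvPolynomial (Fin d) ℂ ⧸ I) = φ := rfl
  -- ============ injectivity of φ ============
  have hinj0 : ∀ p, φ p = 0 → p = 0 := by
    intro p hp
    have hmem : rename emb p ∈ I := by
      rw [hφ] at hp
      exact Ideal.Quotient.eq_zero_iff_mem.mp hp
    have heval : ∀ y : Fin (d - r) → ℂ, eval y p = 0 := by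
      intro y
      set yext : Fin d → ℂ := fun j => if h : r ≤ (j : ℕ) then y ⟨(j : ℕ) - r, by omega⟩ else 0
        with hyext
      obtain ⟨sq, hsq⟩ : ∃ sq : Fin d → ℂ, ∀ i : Fin d,
          (sq i) ^ 2 = -(a i i)⁻¹ * ∑ j ∈ Finset.univ.filter (fun j : Fin d => r ≤ (j : ℕ)),
            a i j * (yext j) ^ 2 := by
        have : ∀ i : Fin d, ∃ z : ℂ, z ^ 2 =
            -(a i i)⁻¹ * ∑ j ∈ Finset.univ.filter (fun j : Fin d => r ≤ (j : ℕ)),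
              a i j * (yext j) ^ 2 :=
          fun i => IsAlgClosed.exists_pow_nat_eq _ (by norm_num)
        exact ⟨fun i => (this i).choose, fun i => (this i).choose_spec⟩
      set w : Fin d → ℂ := fun j => if r ≤ (j : ℕ) then yext j else sq j with hw
      have hvanish : ∀ P ∈ S, eval w P = 0 := by
        rintro P ⟨i, hi, rfl⟩
        have hwi : w i = sq i := by simp [hw, Nat.not_le.mpr hi]
        have hsum : ∀ j ∈ Finset.univ.filter (fun j : Fin d => r ≤ (j : ℕ)), w j = yext j := by
          intro j hj
          simp only [Finset.mem_filter, Finset.mem_univ, true_and] at hj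
          simp [hw, hj]
        have havv := (ha i hi).1
        simp only [map_add, map_mul, map_sum, map_pow, eval_C, eval_X]
        have hsum2 : ∑ j ∈ Finset.univ.filter (fun j : Fin d => r ≤ (j : ℕ)), a i j * w j ^ 2
            = ∑ j ∈ Finset.univ.filter (fun j : Fin d => r ≤ (j : ℕ)), a i j * yext j ^ 2 :=
          Finset.sum_congr rfl fun j hj => by rw [hsum j hj]
        rw [hwi, hsum2, hsq i]
        field_simp
        ring
      have : eval w (rename emb p) = 0 := by
        have hle : I ≤ RingHom.ker (eval w) := by
          rw [hI, Ideal.span_le]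
          intro P hP
          exact RingHom.mem_ker.mpr (hvanish P hP)
        exact RingHom.mem_ker.mp (hle hmem)
      rw [eval_rename] at this
      have hcomp : w ∘ emb = y := by
        funext k
        have h1 : r ≤ ((emb k : Fin d) : ℕ) := by simp [hemb]
        simp only [Function.comp_apply, hw, if_pos h1, hyext, dif_pos h1]
        congr 1
        ext
        simp [hemb]
      rwa [hcomp] at this
    have := MvPolynomial.funext (p := p) (q := 0) (by simpa using heval)
    exact this
  have hinj : Function.Injective φ := by
    intro p1 p2 hp
    have := hinj0 (p1 - p2) (by rw [map_sub, hp, sub_self])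
    exact sub_eq_zero.mp this
  -- ============ integrality ============
  have hXint : ∀ v : Fin d, IsIntegral (MvPolynomial (Fin (d - r)) ℂ)
      (Ideal.Quotient.mk I (X v)) := by
    intro v
    by_cases hv : (v : ℕ) < r
    · -- X v satisfies a monic quadratic over B
      have havv := (ha v hv).1
      set bpoly : MvPolynomial (Fin (d - r)) ℂ :=
        C (-(a v v)⁻¹) * ∑ j ∈ Finset.univ.filter (fun j : Fin d => r ≤ (j : ℕ)),
          C (a v j) * (X (⟨(j : ℕ) - r, by omega⟩ : Fin (d - r))) ^ 2 with hbpoly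
      have hren : rename emb bpoly =
          C (-(a v v)⁻¹) * ∑ j ∈ Finset.univ.filter (fun j : Fin d => r ≤ (j : ℕ)),
            C (a v j) * (X j : MvPolynomial (Fin d) ℂ) ^ 2 := by
        rw [hbpoly, map_mul, rename_C, map_sum]
        congr 1
        refine Finset.sum_congr rfl fun j hj => ?_
        simp only [Finset.mem_filter, Finset.mem_univ, true_and] at hj
        rw [map_mul, map_pow, rename_C, rename_X]
        congr 3
        ext
        simp [hemb]
        omega
      have hkey : (X v : MvPolynomial (Fin d) ℂ) ^ 2 - rename emb bpoly =
          C ((a v v)⁻¹) * (C (a v v) * X v ^ 2 +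
            ∑ j ∈ Finset.univ.filter (fun j : Fin d => r ≤ (j : ℕ)), C (a v j) * X j ^ 2) := by
        rw [hren]
        have hCinv : (C ((a v v)⁻¹) * C (a v v) : MvPolynomial (Fin d) ℂ) = 1 := by
          rw [← C_mul, inv_mul_cancel₀ havv, C_1]
        have hCneg : (C (-(a v v)⁻¹) : MvPolynomial (Fin d) ℂ) = - C ((a v v)⁻¹) := by
          rw [map_neg]
        rw [hCneg]
        linear_combination (-(X v ^ 2) : MvPolynomial (Fin d) ℂ) * hCinv
      have hmem : (X v : MvPolynomial (Fin d) ℂ) ^ 2 - rename emb bpoly ∈ I := by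
        rw [hkey]
        refine Ideal.mul_mem_left _ _ (Ideal.subset_span ?_)
        exact ⟨v, hv, rfl⟩
      refine ⟨Polynomial.X ^ 2 - Polynomial.C bpoly,
        Polynomial.monic_X_pow_sub_C _ (by norm_num), ?_⟩
      rw [Polynomial.eval₂_sub, Polynomial.eval₂_pow, Polynomial.eval₂_X, Polynomial.eval₂_C,
        halgmap]
      rw [hφ]
      show (Ideal.Quotient.mk I (X v)) ^ 2 - (Ideal.Quotient.mk I) (rename emb bpoly) = 0
      rw [← map_pow, ← map_sub, Ideal.Quotient.eq_zero_iff_mem]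
      exact hmem
    · -- X v is in the image of B
      have : Ideal.Quotient.mk I (X v) = φ (X ⟨(v : ℕ) - r, by omega⟩) := by
        rw [hφ]
        simp only [RingHom.comp_apply, AlgHom.toRingHom_eq_coe, RingHom.coe_coe]
        congr 1
        rw [rename_X]
        congr 1
        ext
        simp [hemb]
        omega
      rw [this, ← halgmap]
      exact isIntegral_algebraMap
  haveI hint : Algebra.IsIntegral (MvPolynomial (Fin (d - r)) ℂ)
      (MvPolynomial (Fin d) ℂ ⧸ I) := by
    constructor
    intro z
    obtain ⟨P, rfl⟩ := Ideal.Quotient.mk_surjective z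
    induction P using MvPolynomial.induction_on with
    | C c =>
      have : Ideal.Quotient.mk I (C c) = φ (C c) := by
        rw [hφ]
        simp [rename_C]
      rw [this, ← halgmap]
      exact isIntegral_algebraMap
    | add p q hp hq =>
      rw [map_add]
      exact hp.add hq
    | mul_X p v hp =>
      rw [map_mul]
      exact hp.mul (hXint v)
  -- ============ upper bound ============
  have hub : ringKrullDim (MvPolynomial (Fin d) ℂ ⧸ I) ≤ ((d - r : ℕ) : WithBot (WithTop ℕ)) := by
    refine le_trans ?_ (mvPolynomial_ringKrullDim_le (K := ℂ) (d - r))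
    apply Order.krullDim_le_of_strictMono
      (fun Q : PrimeSpectrum (MvPolynomial (Fin d) ℂ ⧸ I) =>
        (⟨Ideal.comap (algebraMap (MvPolynomial (Fin (d - r)) ℂ) _) Q.asIdeal,
          Q.isPrime.comap _⟩ : PrimeSpectrum (MvPolynomial (Fin (d - r)) ℂ)))
    intro Q Q' hQQ'
    have hlt : Q.asIdeal < Q'.asIdeal := (PrimeSpectrum.asIdeal_lt_asIdeal _ _).mpr hQQ'
    obtain ⟨z, hz1, hz2⟩ := SetLike.exists_of_lt hlt
    have := Ideal.comap_lt_comap_of_integral_mem_sdiff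
      (R := MvPolynomial (Fin (d - r)) ℂ) (le_of_lt hlt) ⟨hz1, hz2⟩
      (Algebra.IsIntegral.isIntegral (R := MvPolynomial (Fin (d - r)) ℂ) z)
    exact (PrimeSpectrum.asIdeal_lt_asIdeal _ _).mp this
  -- ============ lower bound ============
  have hlb : ((d - r : ℕ) : WithBot (WithTop ℕ)) ≤ ringKrullDim (MvPolynomial (Fin d) ℂ ⧸ I) := by
    -- chain of primes in B = ℂ[x_1,...,x_{d-r}]
    set ψ : ℕ → (MvPolynomial (Fin (d - r)) ℂ →ₐ[ℂ] MvPolynomial (Fin (d - r)) ℂ) :=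
      fun k => aeval (fun i : Fin (d - r) => if (i : ℕ) < k then 0 else X i) with hψ
    set pk : ℕ → Ideal (MvPolynomial (Fin (d - r)) ℂ) := fun k => RingHom.ker (ψ k) with hpk
    haveI hkprime : ∀ k, (pk k).IsPrime := fun k => RingHom.ker_isPrime _
    have hkmono : ∀ k, pk k ≤ pk (k + 1) := by
      intro k f hf
      have hcomp : (ψ (k+1)).comp (ψ k) = ψ (k+1) := by
        apply MvPolynomial.algHom_ext
        intro i
        simp only [hψ, AlgHom.comp_apply, aeval_X]
        by_cases hik : (i : ℕ) < k
        · rw [if_pos hik, map_zero, if_pos (by omega)]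
        · rw [if_neg hik, aeval_X]
      have : ψ (k+1) f = 0 := by
        have h1 : ψ (k+1) (ψ k f) = ψ (k+1) f := by
          rw [← AlgHom.comp_apply, hcomp]
        rw [← h1, RingHom.mem_ker.mp hf, map_zero]
      exact RingHom.mem_ker.mpr this
    have hkX : ∀ k (hk : k < d - r), (X (⟨k, hk⟩ : Fin (d - r)) ∈ pk (k+1) ∧
        X (⟨k, hk⟩ : Fin (d - r)) ∉ pk k) := by
      intro k hk
      constructor
      · refine RingHom.mem_ker.mpr ?_
        simp [hψ]
      · refine fun h => ?_
        have := RingHom.mem_ker.mp h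
        simp only [hψ, aeval_X] at this
        rw [if_neg (by omega)] at this
        exact MvPolynomial.X_ne_zero _ this
    -- lift the chain by going-up
    have hker : Ideal.comap (algebraMap (MvPolynomial (Fin (d - r)) ℂ)
        (MvPolynomial (Fin d) ℂ ⧸ I)) ⊥ = ⊥ := by
      rw [halgmap]
      exact (RingHom.injective_iff_ker_eq_bot φ).mp hinj
    have hchain : ∀ k : ℕ, k ≤ d - r →
        ∃ c : LTSeries (PrimeSpectrum (MvPolynomial (Fin d) ℂ ⧸ I)), c.length = k ∧
          Ideal.comap (algebraMap (MvPolynomial (Fin (d - r)) ℂ) _) c.last.asIdeal = pk k := by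
      intro k
      induction k with
      | zero =>
        intro _
        haveI := hkprime 0
        obtain ⟨Q, hQge, hQprime, hQcomap⟩ :=
          Ideal.exists_ideal_over_prime_of_isIntegral (pk 0) ⊥ (by rw [hker]; exact bot_le)
        exact ⟨RelSeries.singleton _ ⟨Q, hQprime⟩, rfl, hQcomap⟩
      | succ k ih =>
        intro hk
        haveI := hkprime (k+1)
        obtain ⟨c, hclen, hccomap⟩ := ih (by omega)
        obtain ⟨Q, hQge, hQprime, hQcomap⟩ :=
          Ideal.exists_ideal_over_prime_of_isIntegral (pk (k+1)) c.last.asIdeal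
            (by rw [hccomap]; exact hkmono k)
        have hne : c.last.asIdeal ≠ Q := by
          intro heq
          have h1 : pk k = pk (k+1) := by rw [← hccomap, ← hQcomap, heq]
          obtain ⟨hmem, hnmem⟩ := hkX k (by omega)
          rw [← h1] at hmem
          exact hnmem hmem
        have hlast : c.last < ⟨Q, hQprime⟩ := by
          apply (PrimeSpectrum.asIdeal_lt_asIdeal _ _).mp
          exact lt_of_le_of_ne hQge hne
        refine ⟨c.snoc ⟨Q, hQprime⟩ hlast, ?_, ?_⟩
        · rw [RelSeries.snoc_length, hclen]
        · rw [RelSeries.last_snoc]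
          exact hQcomap
    obtain ⟨c, hclen, -⟩ := hchain (d - r) le_rfl
    have := Order.LTSeries.length_le_krullDim c
    rw [hclen] at this
    exact_mod_cast this
  exact le_antisymm hub hlb

end AuxMain

/-- in `V = ℂᵈ` with coordinates `x 0, ..., x (d-1)` and `r < d`,
consider for each `i < r` the diagonal quadratic form
`q i = a i i • (x i)² + ∑_{j ≥ r} a i j • (x j)²` with `a i i ≠ 0` and
`a i j ≠ 0` for `j ≥ r`.  Let `Z ⊂ ℙ^{d-1}` be the common zero locus of the
`q i`.  Then `Z` is disjoint from `H = {x_r = ... = x_{d-1} = 0}` (i.e. the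
affine cone of `Z` meets the cone of `H` only in `0`), and `dim Z = d - r - 1`
(i.e. the affine cone over `Z` has Krull dimension `d - r`). -/
theorem common_zero_locus_diagonal_quadrics
    (d r : ℕ) (hr : 0 < r) (hrd : r < d)
    (a : Fin d → Fin d → ℂ)
    (ha : ∀ i : Fin d, (i : ℕ) < r →
      a i i ≠ 0 ∧ ∀ j : Fin d, r ≤ (j : ℕ) → a i j ≠ 0)
    (q : Fin d → (Fin d → ℂ) → ℂ)
    (hq : ∀ i : Fin d, (i : ℕ) < r → ∀ x : Fin d → ℂ, q i x =
      a i i * x i ^ 2 +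
        ∑ j ∈ Finset.univ.filter (fun j : Fin d => r ≤ (j : ℕ)), a i j * x j ^ 2) :
    -- the projective locus Z misses the linear subspace H:
    ({x : Fin d → ℂ | ∀ i : Fin d, (i : ℕ) < r → q i x = 0} ∩
        {x : Fin d → ℂ | ∀ j : Fin d, r ≤ (j : ℕ) → x j = 0}) = {0} ∧
    -- and dim Z = d - r - 1, i.e. the affine cone over Z has dimension d - r:
    ringKrullDim (MvPolynomial (Fin d) ℂ ⧸ Ideal.span
      {P : MvPolynomial (Fin d) ℂ | ∃ i : Fin d, (i : ℕ) < r ∧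
        P = C (a i i) * X i ^ 2 +
          ∑ j ∈ Finset.univ.filter (fun j : Fin d => r ≤ (j : ℕ)),
            C (a i j) * X j ^ 2}) = (d - r : ℕ) := by
  constructor
  · -- Z ∩ H = {0}
    ext x
    simp only [Set.mem_inter_iff, Set.mem_setOf_eq, Set.mem_singleton_iff]
    constructor
    · rintro ⟨h1, h2⟩
      funext v
      show x v = 0
      by_cases hv : (v : ℕ) < r
      · have hqv := hq v hv x
        rw [h1 v hv] at hqv
        have hzero : ∑ j ∈ Finset.univ.filter (fun j : Fin d => r ≤ (j : ℕ)),
            a v j * x j ^ 2 = 0 := by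
          refine Finset.sum_eq_zero fun j hj => ?_
          simp only [Finset.mem_filter, Finset.mem_univ, true_and] at hj
          rw [h2 j hj]
          ring
        rw [hzero, add_zero] at hqv
        have := (ha v hv).1
        have hx2 : x v ^ 2 = 0 := by
          rcases mul_eq_zero.mp hqv.symm with h | h
          · exact absurd h this
          · exact h
        exact pow_eq_zero_iff (n := 2) (by norm_num) |>.mp hx2
      · exact h2 v (le_of_not_gt hv)
    · rintro rfl
      refine ⟨fun i hi => ?_, fun j _ => rfl⟩
      rw [hq i hi 0]
      simp
  · exact dim_quotient_eq d r hr hrd a ha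
end

section
/- Let V = C^d with d > r ≥ 1, and for i = 1,...,r let q_i = a_{i,i}x_i² + Σ_{j>r} a_{i,j}x_j² be quadratic forms with all displayed coefficients nonzero. Let T ⊂ V be a linear subspace on which all q_i vanish identically. Then dim T ≤ (d - r + 1)/2. -/
/-- let `V = ℂᵈ` with `d > r ≥ 1` and for each `i < r` let
`q i = a i i • x i² + ∑_{j ≥ r} a i j • x j²` be simultaneously diagonal
quadratic forms with all displayed coefficients nonzero.  If `T ⊂ V` is a
linear subspace on which all the `q i` vanish identically, then
`dim T ≤ (d - r + 1)/2`. -/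
theorem isotropic_subspace_dim_bound_diagonal
    (d r : ℕ) (hr : 1 ≤ r) (hrd : r < d)
    (a : Fin d → Fin d → ℂ)
    (ha : ∀ i : Fin d, (i : ℕ) < r →
      a i i ≠ 0 ∧ ∀ j : Fin d, r ≤ (j : ℕ) → a i j ≠ 0)
    (q : Fin d → (Fin d → ℂ) → ℂ)
    (hq : ∀ i : Fin d, (i : ℕ) < r → ∀ x : Fin d → ℂ, q i x =
      a i i * x i ^ 2 +
        ∑ j ∈ Finset.univ.filter (fun j : Fin d => r ≤ (j : ℕ)), a i j * x j ^ 2)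
    (T : Submodule ℂ (Fin d → ℂ))
    (hT : ∀ x ∈ T, ∀ i : Fin d, (i : ℕ) < r → q i x = 0) :
    2 * Module.finrank ℂ T ≤ d - r + 1 := by
  classical
  set S : Finset (Fin d) := Finset.univ.filter (fun j : Fin d => r ≤ (j : ℕ)) with hS
  set j₀ : Fin d := ⟨r - 1, by omega⟩ with hj₀
  have hj₀v : (j₀ : ℕ) = r - 1 := rfl
  have hj₀r : (j₀ : ℕ) < r := by omega
  -- the bilinear form associated to q j₀
  set B : LinearMap.BilinForm ℂ (Fin d → ℂ) := LinearMap.mk₂ ℂ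
    (fun x y => a j₀ j₀ * x j₀ * y j₀ + ∑ j ∈ S, a j₀ j * x j * y j)
    (fun x x' y => by
      simp only [Pi.add_apply]
      rw [Finset.sum_congr rfl
        (fun j _ => by ring :
          ∀ j ∈ S, a j₀ j * (x j + x' j) * y j = a j₀ j * x j * y j + a j₀ j * x' j * y j),
        Finset.sum_add_distrib]
      ring)
    (fun c x y => by
      simp only [Pi.smul_apply, smul_eq_mul]
      rw [Finset.sum_congr rfl
        (fun j _ => by ring :
          ∀ j ∈ S, a j₀ j * (c * x j) * y j = c * (a j₀ j * x j * y j)),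
        ← Finset.mul_sum]
      ring)
    (fun x y y' => by
      simp only [Pi.add_apply]
      rw [Finset.sum_congr rfl
        (fun j _ => by ring :
          ∀ j ∈ S, a j₀ j * x j * (y j + y' j) = a j₀ j * x j * y j + a j₀ j * x j * y' j),
        Finset.sum_add_distrib]
      ring)
    (fun c x y => by
      simp only [Pi.smul_apply, smul_eq_mul]
      rw [Finset.sum_congr rfl
        (fun j _ => by ring :
          ∀ j ∈ S, a j₀ j * x j * (c * y j) = c * (a j₀ j * x j * y j)),
        ← Finset.mul_sum]
      ring) with hB
  have hBapply : ∀ x y : Fin d → ℂ,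
      B x y = a j₀ j₀ * x j₀ * y j₀ + ∑ j ∈ S, a j₀ j * x j * y j := fun x y => rfl
  have hBsymm : ∀ x y : Fin d → ℂ, B x y = B y x := by
    intro x y
    rw [hBapply, hBapply]
    rw [Finset.sum_congr rfl
      (fun j _ => by ring : ∀ j ∈ S, a j₀ j * x j * y j = a j₀ j * y j * x j)]
    ring
  have hBrefl : B.IsRefl := fun x y h => by rw [← hBsymm]; exact h
  -- key vanishing lemma
  have hzero : ∀ x ∈ T, (∀ j : Fin d, r ≤ (j : ℕ) → x j = 0) → x = 0 := by
    intro x hxT hsupp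
    funext i
    by_cases hi : (i : ℕ) < r
    · have h0 := hT x hxT i hi
      rw [hq i hi] at h0
      have hsum : ∑ j ∈ S, a i j * x j ^ 2 = 0 := by
        refine Finset.sum_eq_zero fun j hj => ?_
        rw [hsupp j (by simpa [hS] using hj)]; ring
      rw [hsum, add_zero] at h0
      have := (ha i hi).1
      have hx2 : x i ^ 2 = 0 := by
        rcases mul_eq_zero.mp h0 with h | h
        · exact absurd h this
        · exact h
      exact pow_eq_zero_iff (n := 2) (by norm_num) |>.mp hx2
    · exact hsupp i (le_of_not_gt hi)
  -- B vanishes on T × T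
  have hTorth : T ≤ B.orthogonal T := by
    intro y hy
    rw [LinearMap.BilinForm.mem_orthogonal_iff]
    intro x hx
    have hqx := hT x hx j₀ hj₀r
    have hqy := hT y hy j₀ hj₀r
    have hqxy := hT (x + y) (T.add_mem hx hy) j₀ hj₀r
    rw [hq j₀ hj₀r] at hqx hqy hqxy
    have hexp : ∀ j ∈ S, a j₀ j * ((x + y) j) ^ 2 =
        a j₀ j * x j ^ 2 + a j₀ j * y j ^ 2 + 2 * (a j₀ j * x j * y j) := by
      intro j _; simp only [Pi.add_apply]; ring
    rw [Finset.sum_congr rfl hexp, Finset.sum_add_distrib, Finset.sum_add_distrib,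
      ← Finset.mul_sum] at hqxy
    have h2 : (2 : ℂ) * B x y = 0 := by
      rw [hBapply]
      simp only [Pi.add_apply] at hqxy
      linear_combination hqxy - hqx - hqy
    have : B x y = 0 := by
      have h2ne : (2 : ℂ) ≠ 0 := by norm_num
      exact (mul_eq_zero.mp h2).resolve_left h2ne
    exact this
  -- the radical-like subspace R spanned by the first r - 1 coordinate vectors
  set e : Fin (r - 1) → Fin d := fun k => ⟨(k : ℕ), by omega⟩ with he
  set v : Fin (r - 1) → (Fin d → ℂ) := fun k => Pi.single (e k) 1 with hv
  have hvind : LinearIndependent ℂ v := by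
    have hinj : Function.Injective e := by
      intro k k' h
      exact Fin.ext (by simpa [he, Fin.ext_iff] using h)
    have := (Pi.basisFun ℂ (Fin d)).linearIndependent.comp e hinj
    convert this using 1
    funext k
    simp [hv, Pi.basisFun_apply]
  set R : Submodule ℂ (Fin d → ℂ) := Submodule.span ℂ (Set.range v) with hR
  have hRrank : Module.finrank ℂ R = r - 1 := by
    rw [hR, finrank_span_eq_card hvind, Fintype.card_fin]
  -- R is orthogonal to T
  have hRorth : R ≤ B.orthogonal T := by
    rw [hR, Submodule.span_le]
    rintro _ ⟨k, rfl⟩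
    rw [SetLike.mem_coe, LinearMap.BilinForm.mem_orthogonal_iff]
    intro n _
    have hek : (e k : ℕ) < r - 1 := k.isLt
    rw [hBapply]
    have h1 : v k j₀ = 0 := by
      rw [hv]
      exact Pi.single_eq_of_ne (by
        intro h; rw [Fin.ext_iff] at h; omega) 1
    have h2 : ∑ j ∈ S, a j₀ j * n j * v k j = 0 := by
      refine Finset.sum_eq_zero fun j hj => ?_
      have hjr : r ≤ (j : ℕ) := by simpa [hS] using hj
      have : v k j = 0 := by
        rw [hv]
        exact Pi.single_eq_of_ne (by
          intro h
          rw [Fin.ext_iff] at h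
          omega) 1
      rw [this]; ring
    rw [h1, h2]; ring
  -- elements of R vanish on coordinates ≥ r
  have hRsupp : ∀ x ∈ R, ∀ j : Fin d, r ≤ (j : ℕ) → x j = 0 := by
    intro x hx j hj
    have hle : R ≤ LinearMap.ker (LinearMap.proj j : ((Fin d → ℂ)) →ₗ[ℂ] ℂ) := by
      rw [hR, Submodule.span_le]
      rintro _ ⟨k, rfl⟩
      rw [SetLike.mem_coe, LinearMap.mem_ker]
      have : v k j = 0 := by
        rw [hv]
        refine Pi.single_eq_of_ne ?_ 1
        intro h
        rw [Fin.ext_iff] at h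
        have : (e k : ℕ) < r - 1 := k.isLt
        omega
      simpa using this
    simpa using hle hx
  -- T ⊓ R = ⊥
  have hTR : T ⊓ R = ⊥ := by
    rw [Submodule.eq_bot_iff]
    rintro x ⟨hxT, hxR⟩
    exact hzero x hxT (fun j hj => hRsupp x hxR j hj)
  -- T ⊓ B.orthogonal ⊤ = ⊥
  have hTrad : T ⊓ B.orthogonal ⊤ = ⊥ := by
    rw [Submodule.eq_bot_iff]
    rintro x ⟨hxT, hxO⟩
    refine hzero x hxT (fun j hj => ?_)
    have hBj : B (Pi.single j 1) x = 0 := hxO (Pi.single j 1) Submodule.mem_top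
    have hjS : j ∈ S := by simp [hS, hj]
    have hne0 : j₀ ≠ j := by intro h; rw [Fin.ext_iff] at h; omega
    rw [hBapply, Pi.single_eq_of_ne hne0,
      Finset.sum_eq_single j
        (fun j' _ hne => by rw [Pi.single_eq_of_ne hne]; ring)
        (fun h => absurd hjS h),
      Pi.single_eq_same] at hBj
    have haj : a j₀ j ≠ 0 := (ha j₀ hj₀r).2 j hj
    have : a j₀ j * x j = 0 := by linear_combination hBj
    exact (mul_eq_zero.mp this).resolve_left haj
  -- dimension count
  have hdim := LinearMap.BilinForm.finrank_add_finrank_orthogonal hBrefl (B := B) T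
  rw [hTrad, finrank_bot ℂ (Fin d → ℂ), add_zero] at hdim
  have hfin : Module.finrank ℂ (Fin d → ℂ) = d := by simp
  rw [hfin] at hdim
  have hsup : T ⊔ R ≤ B.orthogonal T := sup_le hTorth hRorth
  have hsupdim : Module.finrank ℂ ↥(T ⊔ R) = Module.finrank ℂ T + (r - 1) := by
    have := Submodule.finrank_sup_add_finrank_inf_eq T R
    rw [hTR, finrank_bot ℂ (Fin d → ℂ), add_zero, hRrank] at this
    exact this
  have hle := Submodule.finrank_mono hsup
  omega
end
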